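/- arXiv:2009.01437 — 7 statements merged into one kernel-verified Lean document; each statement's English description precedes it below -/
import Mathlib

section
/- Let τ0 > 0 and for (d,v) ∈ ℝ² write Z = d + τ0·v. Let D ⊂ ℝ² be a bounded Lebesgue-measurable set, D0 = D ∩ {Z ≥ 0}, D1 = D ∩ {Z < 0}, and let u : ℝ² → ℝ be Lebesgue integrable on D with u(d,v) > 0 for all (d,v) ∈ D. Then for every fixed σ > 0 the map λ ↦ U(λ,σ) is twice differentiable on ℝ and ∂²U/∂λ² = (1/(√(2π)·σ³)) · ∬_{D} u(d,v) · exp(−(Z−λ)²/(2σ²)) · |Z| dd dv − (λ/σ²) · ∂U/∂λ. -/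
open MeasureTheory Real Filter

/-- The Gaussian Q-function `Q(x) = (1/√(2π)) ∫_x^∞ exp(−t²/2) dt`. -/
noncomputable def Qfun (x : ℝ) : ℝ :=
  (Real.sqrt (2 * Real.pi))⁻¹ * ∫ t in Set.Ioi x, Real.exp (-t ^ 2 / 2)

/-- The wrong-decision probability `P_w(d,v;λ,σ)`. -/
noncomputable def Pw (τ0 σ lam : ℝ) (p : ℝ × ℝ) : ℝ :=
  if 0 ≤ p.1 + τ0 * p.2 then Qfun ((p.1 + τ0 * p.2 - lam) / σ)
  else Qfun (-(p.1 + τ0 * p.2 - lam) / σ)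

/-- The total wrong decision loss `U(λ,σ) = ∬_D u(d,v) P_w(d,v;λ,σ) dd dv`. -/
noncomputable def Uloss (τ0 : ℝ) (D : Set (ℝ × ℝ)) (u : ℝ × ℝ → ℝ) (lam σ : ℝ) : ℝ :=
  ∫ p in D, u p * Pw τ0 σ lam p

/-! With `s = ±1` the sign of `Z`, `P_w = Q(s (Z - λ) / σ)`, so `∂_λ P_w = s φ_σ(Z - λ)` and
`∂²_λ P_w = s φ_σ(Z - λ) (Z - λ) / σ²`, where `φ_σ` is the centred normal density. On a bounded `D`
the statistic `Z` is bounded, so both derivatives are bounded uniformly in `(d, v)` for `λ` near a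
given point, and dominated convergence against the integrable weight `u` differentiates `U` twice
under the integral. The identity `s (Z - λ) = |Z| - λ s` splits the second derivative into the two
stated terms. -/

lemma hasDerivAt_integral_Ioi {E : Type*} [NormedAddCommGroup E] [NormedSpace ℝ E]
    [CompleteSpace E] {f : ℝ → E} (hf : Integrable f) (hf_cont : Continuous f) (x : ℝ) :
    HasDerivAt (fun y => ∫ t in Set.Ioi y, f t) (-f x) x := by
  have h : (fun y => ∫ t in Set.Ioi y, f t) =
      fun y => ((∫ t, f t) - ∫ t in Set.Iic 0, f t) - ∫ t in (0 : ℝ)..y, f t := by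
    funext y
    rw [← intervalIntegral.integral_Iic_sub_Iic hf.integrableOn hf.integrableOn,
      ← intervalIntegral.integral_Iic_add_Ioi (b := y) hf.integrableOn hf.integrableOn]
    abel
  rw [h]
  exact (intervalIntegral.integral_hasDerivAt_right hf.intervalIntegrable
    hf_cont.aestronglyMeasurable.stronglyMeasurableAtFilter hf_cont.continuousAt).const_sub _

lemma integrable_exp_neg_sq_div_two : Integrable fun t : ℝ => exp (-t ^ 2 / 2) := by
  simpa [neg_div, div_eq_inv_mul] using integrable_exp_neg_mul_sq (by norm_num : (0 : ℝ) < 1 / 2)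

lemma integral_exp_neg_sq_div_two : ∫ t : ℝ, exp (-t ^ 2 / 2) = √(2 * π) := by
  simpa [neg_div, div_eq_inv_mul, mul_comm] using integral_gaussian (1 / 2)

noncomputable def gaussDensity (σ x : ℝ) : ℝ := (√(2 * π) * σ)⁻¹ * exp (-x ^ 2 / (2 * σ ^ 2))

lemma gaussDensity_nonneg {σ : ℝ} (hσ : 0 ≤ σ) (x : ℝ) : 0 ≤ gaussDensity σ x := by
  unfold gaussDensity; positivity

lemma exp_neg_sq_div_le_one {c : ℝ} (hc : 0 ≤ c) (x : ℝ) : exp (-x ^ 2 / c) ≤ 1 :=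
  exp_le_one_iff.2 (div_nonpos_of_nonpos_of_nonneg (neg_nonpos.2 (sq_nonneg x)) hc)

lemma gaussDensity_le {σ : ℝ} (hσ : 0 ≤ σ) (x : ℝ) : gaussDensity σ x ≤ (√(2 * π) * σ)⁻¹ :=
  mul_le_of_le_one_right (by positivity) (exp_neg_sq_div_le_one (by positivity) x)

lemma hasDerivAt_Qfun (x : ℝ) : HasDerivAt Qfun (-gaussDensity 1 x) x := by
  have h := (hasDerivAt_integral_Ioi integrable_exp_neg_sq_div_two (by fun_prop) x).const_mul
    (√(2 * π))⁻¹
  refine h.congr_deriv ?_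
  simp [gaussDensity]

@[fun_prop]
lemma continuous_Qfun : Continuous Qfun :=
  continuous_iff_continuousAt.2 fun x => (hasDerivAt_Qfun x).continuousAt

lemma Qfun_nonneg (x : ℝ) : 0 ≤ Qfun x :=
  mul_nonneg (by positivity) (setIntegral_nonneg measurableSet_Ioi fun t _ => (exp_pos _).le)

lemma Qfun_le_one (x : ℝ) : Qfun x ≤ 1 := by
  have hle : ∫ t in Set.Ioi x, exp (-t ^ 2 / 2) ≤ √(2 * π) :=
    integral_exp_neg_sq_div_two ▸
      setIntegral_le_integral integrable_exp_neg_sq_div_two (ae_of_all _ fun t => (exp_pos _).le)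
  calc Qfun x ≤ (√(2 * π))⁻¹ * √(2 * π) := mul_le_mul_of_nonneg_left hle (by positivity)
    _ = 1 := inv_mul_cancel₀ (by positivity)

lemma hasDerivAt_Qfun_mul_sub_div {s σ : ℝ} (hs : s ^ 2 = 1) (hσ : σ ≠ 0) (z l : ℝ) :
    HasDerivAt (fun l => Qfun (s * (z - l) / σ)) (s * gaussDensity σ (z - l)) l := by
  have hinner : HasDerivAt (fun l => s * (z - l) / σ) (-s / σ) l := by
    simpa using (((hasDerivAt_id l).const_sub z).const_mul s).div_const σ
  refine ((hasDerivAt_Qfun _).comp l hinner).congr_deriv ?_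
  have hexp : -(s * (z - l) / σ) ^ 2 / (2 * 1 ^ 2) = -(z - l) ^ 2 / (2 * σ ^ 2) := by
    rw [div_pow, mul_pow, hs]; field_simp
  simp only [gaussDensity, hexp, mul_inv, mul_one]
  field_simp

lemma hasDerivAt_gaussDensity_sub (σ z l : ℝ) :
    HasDerivAt (fun l => gaussDensity σ (z - l))
      (gaussDensity σ (z - l) * ((z - l) / σ ^ 2)) l := by
  have hsq : HasDerivAt (fun l => -(z - l) ^ 2 / (2 * σ ^ 2)) ((z - l) / σ ^ 2) l := by
    refine ((((hasDerivAt_id l).const_sub z).pow 2).neg.div_const (2 * σ ^ 2)).congr_deriv ?_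
    by_cases hσ : σ = 0
    · simp [hσ]
    · field_simp; simp
  refine (hsq.exp.const_mul (√(2 * π) * σ)⁻¹).congr_deriv ?_
  simp only [gaussDensity, mul_assoc]

-- Unlike `SignType.sign`, this is `1` at `0`, matching the first branch of `Pw`.
noncomputable def decisionSign (z : ℝ) : ℝ := if 0 ≤ z then 1 else -1

lemma decisionSign_sq (z : ℝ) : decisionSign z ^ 2 = 1 := by
  unfold decisionSign; split_ifs <;> norm_num

lemma abs_decisionSign (z : ℝ) : |decisionSign z| = 1 := by
  unfold decisionSign; split_ifs <;> norm_num

lemma decisionSign_mul_self (z : ℝ) : decisionSign z * z = |z| := by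
  unfold decisionSign; split_ifs with h
  · rw [one_mul, abs_of_nonneg h]
  · rw [abs_of_neg (not_le.1 h)]; ring

@[fun_prop]
lemma measurable_decisionSign : Measurable decisionSign :=
  Measurable.ite measurableSet_Ici measurable_const measurable_const

lemma Pw_eq_Qfun (τ0 σ lam : ℝ) (p : ℝ × ℝ) :
    Pw τ0 σ lam p =
      Qfun (decisionSign (p.1 + τ0 * p.2) * (p.1 + τ0 * p.2 - lam) / σ) := by
  unfold Pw decisionSign; split_ifs <;> simp

@[fun_prop]
lemma continuous_gaussDensity (σ : ℝ) : Continuous (gaussDensity σ) := by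
  unfold gaussDensity; fun_prop

lemma decisionSign_mul_gaussDensity_mul_div (σ z lam : ℝ) :
    decisionSign z * (gaussDensity σ (z - lam) * ((z - lam) / σ ^ 2)) =
      (√(2 * π) * σ ^ 3)⁻¹ * (exp (-(z - lam) ^ 2 / (2 * σ ^ 2)) * |z|) -
        lam / σ ^ 2 * (decisionSign z * gaussDensity σ (z - lam)) := by
  rw [← decisionSign_mul_self, gaussDensity]
  ring

lemma abs_decisionSign_mul_gaussDensity_mul_div_le {σ z l lam R : ℝ} (hσ : 0 < σ)
    (hz : |z| ≤ R) (hl : l ∈ Metric.ball lam 1) :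
    |decisionSign z * (gaussDensity σ (z - l) * ((z - l) / σ ^ 2))| ≤
      (√(2 * π) * σ)⁻¹ * ((R + |lam| + 1) / σ ^ 2) := by
  have hl' : |l| ≤ |lam| + 1 := by
    have := abs_sub_abs_le_abs_sub l lam
    rw [Metric.mem_ball, Real.dist_eq] at hl
    linarith
  rw [abs_mul, abs_decisionSign, one_mul, abs_mul, abs_of_nonneg (gaussDensity_nonneg hσ.le _),
    abs_div, abs_of_pos (by positivity : (0 : ℝ) < σ ^ 2)]
  gcongr
  · exact gaussDensity_le hσ.le _
  · linarith [abs_sub z l]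

lemma Bornology.IsBounded.exists_ae_restrict_norm_le {E F : Type*} [NormedAddCommGroup E]
    [ProperSpace E] [MeasurableSpace E] [OpensMeasurableSpace E] [SeminormedAddGroup F]
    {μ : Measure E} {D : Set E} (hD : Bornology.IsBounded D) {f : E → F} (hf : Continuous f) :
    ∃ C, ∀ᵐ x ∂μ.restrict D, ‖f x‖ ≤ C := by
  obtain ⟨C, hC⟩ := hD.isCompact_closure.exists_bound_of_continuousOn hf.continuousOn
  exact ⟨C, ae_restrict_of_ae_restrict_of_subset subset_closure
    ((ae_restrict_mem isClosed_closure.measurableSet).mono hC)⟩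

lemma hasDerivAt_integral_mul_of_deriv_le {α : Type*} [MeasurableSpace α] {μ : Measure α}
    {u : α → ℝ} (hu : Integrable u μ) {F F' : ℝ → α → ℝ} {x₀ C : ℝ}
    (hF_meas : ∀ x, AEStronglyMeasurable (F x) μ) (hF_int : Integrable (fun a => u a * F x₀ a) μ)
    (hF'_meas : AEStronglyMeasurable (F' x₀) μ)
    (hF'_le : ∀ᵐ a ∂μ, ∀ x ∈ Metric.ball x₀ 1, |F' x a| ≤ C)
    (hF : ∀ a x, HasDerivAt (F · a) (F' x a) x) :
    Integrable (fun a => u a * F' x₀ a) μ ∧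
      HasDerivAt (fun x => ∫ a, u a * F x a ∂μ) (∫ a, u a * F' x₀ a ∂μ) x₀ :=
  hasDerivAt_integral_of_dominated_loc_of_deriv_le (bound := fun a => ‖u a‖ * C)
    (Metric.ball_mem_nhds x₀ one_pos)
    (Eventually.of_forall fun x => hu.aestronglyMeasurable.mul (hF_meas x)) hF_int
    (hu.aestronglyMeasurable.mul hF'_meas)
    (hF'_le.mono fun a ha x hx => by
      rw [norm_mul, Real.norm_eq_abs (F' x a)]
      exact mul_le_mul_of_nonneg_left (ha x hx) (norm_nonneg _))
    (hu.norm.mul_const C) (ae_of_all _ fun a x _ => (hF a x).const_mul (u a))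

section Uloss

variable {τ0 σ : ℝ} {D : Set (ℝ × ℝ)} {u : ℝ × ℝ → ℝ}

lemma hasDerivAt_Uloss (hu : IntegrableOn u D) (hσ : 0 < σ) (lam : ℝ) :
    Integrable (fun p => u p * (decisionSign (p.1 + τ0 * p.2) *
        gaussDensity σ (p.1 + τ0 * p.2 - lam))) (volume.restrict D) ∧
      HasDerivAt (fun l => Uloss τ0 D u l σ)
        (∫ p in D, u p * (decisionSign (p.1 + τ0 * p.2) *
          gaussDensity σ (p.1 + τ0 * p.2 - lam))) lam := by
  simp_rw [Uloss, Pw_eq_Qfun]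
  refine hasDerivAt_integral_mul_of_deriv_le hu (C := (√(2 * π) * σ)⁻¹)
    (fun l => by fun_prop) ?_ (by fun_prop : Measurable _).aestronglyMeasurable
    (ae_of_all _ fun p l _ => ?_)
    (fun p l => hasDerivAt_Qfun_mul_sub_div (decisionSign_sq _) hσ.ne' _ l)
  · refine hu.mul_bdd (c := 1) (by fun_prop) (ae_of_all _ fun p => ?_)
    rw [Real.norm_eq_abs, abs_of_nonneg (Qfun_nonneg _)]
    exact Qfun_le_one _
  · rw [abs_mul, abs_decisionSign, one_mul, abs_of_nonneg (gaussDensity_nonneg hσ.le _)]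
    exact gaussDensity_le hσ.le _

lemma hasDerivAt_deriv_Uloss (hD : Bornology.IsBounded D) (hu : IntegrableOn u D) (hσ : 0 < σ)
    (lam : ℝ) :
    HasDerivAt (deriv fun l => Uloss τ0 D u l σ)
      ((√(2 * π) * σ ^ 3)⁻¹ *
          (∫ p in D, u p * exp (-(p.1 + τ0 * p.2 - lam) ^ 2 / (2 * σ ^ 2)) * |p.1 + τ0 * p.2|) -
        lam / σ ^ 2 * deriv (fun l => Uloss τ0 D u l σ) lam) lam := by
  obtain ⟨R, hR⟩ := hD.exists_ae_restrict_norm_le (μ := volume)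
    (f := fun p : ℝ × ℝ => p.1 + τ0 * p.2) (by fun_prop)
  simp only [Real.norm_eq_abs] at hR
  have hderiv : deriv (fun l => Uloss τ0 D u l σ) = fun l => ∫ p in D, u p *
      (decisionSign (p.1 + τ0 * p.2) * gaussDensity σ (p.1 + τ0 * p.2 - l)) :=
    funext fun l => (hasDerivAt_Uloss hu hσ l).2.deriv
  have hsecond := hasDerivAt_integral_mul_of_deriv_le hu
    (C := (√(2 * π) * σ)⁻¹ * ((R + |lam| + 1) / σ ^ 2))
    (fun l => (by fun_prop : Measurable _).aestronglyMeasurable) (hasDerivAt_Uloss hu hσ lam).1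
    (by fun_prop : Measurable _).aestronglyMeasurable ?_
    (fun p l => (hasDerivAt_gaussDensity_sub σ _ l).const_mul (decisionSign (p.1 + τ0 * p.2)))
  · have hint : Integrable (fun p => u p *
        (exp (-(p.1 + τ0 * p.2 - lam) ^ 2 / (2 * σ ^ 2)) * |p.1 + τ0 * p.2|)) (volume.restrict D) :=
      hu.mul_bdd (c := R) (by fun_prop) (hR.mono fun p hp => by
        rw [norm_mul, norm_abs_eq_norm, Real.norm_eq_abs, Real.norm_eq_abs,
          abs_of_pos (exp_pos _)]
        exact (mul_le_of_le_one_left (abs_nonneg _)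
          (exp_neg_sq_div_le_one (by positivity) _)).trans hp)
    rw [hderiv]
    refine hsecond.2.congr_deriv ?_
    have hsplit : ∀ p : ℝ × ℝ, u p * (decisionSign (p.1 + τ0 * p.2) *
        (gaussDensity σ (p.1 + τ0 * p.2 - lam) * ((p.1 + τ0 * p.2 - lam) / σ ^ 2))) =
        (√(2 * π) * σ ^ 3)⁻¹ *
          (u p * (exp (-(p.1 + τ0 * p.2 - lam) ^ 2 / (2 * σ ^ 2)) * |p.1 + τ0 * p.2|)) -
        lam / σ ^ 2 * (u p * (decisionSign (p.1 + τ0 * p.2) *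
          gaussDensity σ (p.1 + τ0 * p.2 - lam))) := fun p => by
      rw [decisionSign_mul_gaussDensity_mul_div]; ring
    simp_rw [hsplit]
    rw [integral_sub (hint.const_mul _) ((hasDerivAt_Uloss hu hσ lam).1.const_mul _),
      integral_const_mul, integral_const_mul]
    simp only [mul_assoc]
  · exact hR.mono fun p hp l hl => abs_decisionSign_mul_gaussDensity_mul_div_le hσ hp hl

end Uloss

theorem stmt1_general (τ0 : ℝ) (D : Set (ℝ × ℝ))
    (hDbdd : Bornology.IsBounded D) (u : ℝ × ℝ → ℝ)
    (hu_int : IntegrableOn u D volume)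
    (σ : ℝ) (hσ : 0 < σ) :
    Differentiable ℝ (fun l => Uloss τ0 D u l σ) ∧
    Differentiable ℝ (deriv (fun l => Uloss τ0 D u l σ)) ∧
    ∀ lam : ℝ,
      deriv (deriv (fun l => Uloss τ0 D u l σ)) lam =
        (Real.sqrt (2 * Real.pi) * σ ^ 3)⁻¹ *
          (∫ p in D, u p * Real.exp (-(p.1 + τ0 * p.2 - lam) ^ 2 / (2 * σ ^ 2)) *
            |p.1 + τ0 * p.2|) -
        (lam / σ ^ 2) * deriv (fun l => Uloss τ0 D u l σ) lam :=
  ⟨fun lam => (hasDerivAt_Uloss hu_int hσ lam).2.differentiableAt,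
    fun lam => (hasDerivAt_deriv_Uloss hDbdd hu_int hσ lam).differentiableAt,
    fun lam => (hasDerivAt_deriv_Uloss hDbdd hu_int hσ lam).deriv⟩

theorem stmt1 (τ0 : ℝ) (hτ0 : 0 < τ0) (D : Set (ℝ × ℝ)) (hDmeas : MeasurableSet D)
    (hDbdd : Bornology.IsBounded D) (u : ℝ × ℝ → ℝ)
    (hu_int : IntegrableOn u D volume)
    (hu_pos : ∀ p ∈ D, 0 < u p)
    (σ : ℝ) (hσ : 0 < σ) :
    Differentiable ℝ (fun l => Uloss τ0 D u l σ) ∧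
    Differentiable ℝ (deriv (fun l => Uloss τ0 D u l σ)) ∧
    ∀ lam : ℝ,
      deriv (deriv (fun l => Uloss τ0 D u l σ)) lam =
        (Real.sqrt (2 * Real.pi) * σ ^ 3)⁻¹ *
          (∫ p in D, u p * Real.exp (-(p.1 + τ0 * p.2 - lam) ^ 2 / (2 * σ ^ 2)) *
            |p.1 + τ0 * p.2|) -
        (lam / σ ^ 2) * deriv (fun l => Uloss τ0 D u l σ) lam :=
  stmt1_general τ0 D hDbdd u hu_int σ hσ
end

section
/- Let f : ℝ → ℝ be twice differentiable and suppose that for every x ∈ ℝ with f'(x) = 0 one has f''(x) > 0. Then f has at most one critical point; moreover, if x0 is a critical point of f, then f attains its strict global minimum at x0, i.e. f(x) > f(x0) for all x ≠ x0. -/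
/-! If `f'` vanishes at `x₀`, then `f'' x₀ > 0` makes `f'` cross zero upwards there. A continuous
function all of whose zeros are upward crossings cannot come back to zero after one of them
(by continuous induction it stays nonnegative, and a later zero would be preceded by negative
values), nor be nonnegative before one (the intermediate value theorem would produce an earlier
zero). So `f' < 0` left of `x₀` and `f' > 0` right of it, which gives both claims. -/

open Set Filter Topology

lemma nonneg_of_le_of_nonneg {g : ℝ → ℝ} (hg : Continuous g)
    (hright : ∀ z, g z = 0 → ∀ᶠ x in 𝓝[>] z, 0 < g x) {a b : ℝ} (ha : 0 ≤ g a) (hab : a ≤ b) :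
    0 ≤ g b := by
  have hIcc : Icc a b ⊆ {t | 0 ≤ g t} :=
    ((isClosed_le continuous_const hg).inter isClosed_Icc).Icc_subset_of_forall_mem_nhdsWithin ha
      fun x ⟨(hx : 0 ≤ g x), _⟩ ↦ by
        rcases hx.eq_or_lt with hx0 | hx0
        · exact (hright x hx0.symm).mono fun _ ↦ le_of_lt
        · exact nhdsWithin_le_nhds <|
            ((hg.tendsto x).eventually (eventually_gt_nhds hx0)).mono fun _ ↦ le_of_lt
  exact hIcc ⟨hab, le_rfl⟩

lemma pos_of_eq_zero_of_lt {g : ℝ → ℝ} (hg : Continuous g)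
    (hright : ∀ z, g z = 0 → ∀ᶠ x in 𝓝[>] z, 0 < g x)
    (hleft : ∀ z, g z = 0 → ∀ᶠ x in 𝓝[<] z, g x < 0) {a b : ℝ} (ha : g a = 0) (hab : a < b) :
    0 < g b := by
  refine (nonneg_of_le_of_nonneg hg hright ha.ge hab.le).lt_of_ne' fun hb ↦ ?_
  obtain ⟨x, hx, hxab⟩ := ((hleft b hb).and (Ioo_mem_nhdsLT hab)).exists
  exact hx.not_ge (nonneg_of_le_of_nonneg hg hright ha.ge hxab.1.le)

lemma neg_of_lt_of_eq_zero {g : ℝ → ℝ} (hg : Continuous g)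
    (hright : ∀ z, g z = 0 → ∀ᶠ x in 𝓝[>] z, 0 < g x)
    (hleft : ∀ z, g z = 0 → ∀ᶠ x in 𝓝[<] z, g x < 0) {a b : ℝ} (hb : g b = 0) (hab : a < b) :
    g a < 0 := by
  by_contra! ha
  obtain ⟨x, hx, hxab⟩ := ((hleft b hb).and (Ioo_mem_nhdsLT hab)).exists
  obtain ⟨c, hc, hc0⟩ := intermediate_value_Icc' hxab.1.le hg.continuousOn ⟨hx.le, ha⟩
  exact (pos_of_eq_zero_of_lt hg hright hleft hc0 (hc.2.trans_lt hxab.2)).ne' hb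

lemma apply_lt_apply_of_deriv_neg_of_deriv_pos {f : ℝ → ℝ} (hf : Continuous f) {x₀ : ℝ}
    (hneg : ∀ x < x₀, deriv f x < 0) (hpos : ∀ x, x₀ < x → 0 < deriv f x) {x : ℝ}
    (hx : x ≠ x₀) : f x₀ < f x := by
  rcases hx.lt_or_gt with hx | hx
  · exact strictAntiOn_of_deriv_neg (convex_Iic x₀) hf.continuousOn (by simpa using hneg)
      hx.le self_mem_Iic hx
  · exact strictMonoOn_of_deriv_pos (convex_Ici x₀) hf.continuousOn (by simpa using hpos)
      self_mem_Ici hx.le hx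

theorem stmt4 (f : ℝ → ℝ)
    (hf : Differentiable ℝ f) (hf' : Differentiable ℝ (deriv f))
    (hcrit : ∀ x : ℝ, deriv f x = 0 → 0 < deriv (deriv f) x) :
    (∀ x y : ℝ, deriv f x = 0 → deriv f y = 0 → x = y) ∧
    (∀ x0 : ℝ, deriv f x0 = 0 → ∀ x : ℝ, x ≠ x0 → f x0 < f x) := by
  have hsign (z : ℝ) (hz : deriv f z = 0) :
      ∀ᶠ x in 𝓝[≠] z, SignType.sign (deriv f x) = SignType.sign (x - z) :=
    nhdsWithin_le_nhds (eventually_nhdsWithin_sign_eq_of_deriv_pos (hcrit z hz) hz)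
  have hright (z : ℝ) (hz : deriv f z = 0) : ∀ᶠ x in 𝓝[>] z, 0 < deriv f x :=
    deriv_pos_right_of_sign_deriv (hsign z hz)
  have hleft (z : ℝ) (hz : deriv f z = 0) : ∀ᶠ x in 𝓝[<] z, deriv f x < 0 :=
    deriv_neg_left_of_sign_deriv (hsign z hz)
  have hpos {a b : ℝ} (ha : deriv f a = 0) (hab : a < b) : 0 < deriv f b :=
    pos_of_eq_zero_of_lt hf'.continuous hright hleft ha hab
  have hneg {a b : ℝ} (hb : deriv f b = 0) (hab : a < b) : deriv f a < 0 :=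
    neg_of_lt_of_eq_zero hf'.continuous hright hleft hb hab
  refine ⟨fun x y hx hy ↦ ?_, fun x₀ h₀ x hx ↦ ?_⟩
  · exact le_antisymm (not_lt.1 fun h ↦ (hpos hy h).ne' hx) (not_lt.1 fun h ↦ (hpos hx h).ne' hy)
  · exact apply_lt_apply_of_deriv_neg_of_deriv_pos hf.continuous (fun _ hy ↦ hneg h₀ hy)
      (fun _ hy ↦ hpos h₀ hy) hx
end

section
/- Let σ_d > 0, σ_v > 0, τ0 > 0, and let R = {(d,v) ∈ ℝ² : d + τ0·v ≤ 0 and d ≥ 0}. Let (d̂, v̂) ∈ ℝ² satisfy d̂ + τ0·v̂ ≥ 0 and d̂ > 0. Then the infimum over (d,v) ∈ R of (d̂−d)²/σ_d² + (v̂−v)²/σ_v² equals: (i) (d̂ + τ0·v̂)²/(σ_d² + τ0²·σ_v²) if d̂ ≥ (σ_d²/(σ_v²·τ0))·v̂; and (ii) d̂²/σ_d² + v̂²/σ_v² if d̂ < (σ_d²/(σ_v²·τ0))·v̂. -/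
theorem stmt8 (σd σv τ0 : ℝ) (hσd : 0 < σd) (hσv : 0 < σv) (hτ0 : 0 < τ0)
    (dh vh : ℝ) (hsafe : 0 ≤ dh + τ0 * vh) (hdh : 0 < dh) :
    (σd ^ 2 / (σv ^ 2 * τ0) * vh ≤ dh →
      sInf {x : ℝ | ∃ d v : ℝ, d + τ0 * v ≤ 0 ∧ 0 ≤ d ∧
          x = (dh - d) ^ 2 / σd ^ 2 + (vh - v) ^ 2 / σv ^ 2} =
        (dh + τ0 * vh) ^ 2 / (σd ^ 2 + τ0 ^ 2 * σv ^ 2)) ∧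
    (dh < σd ^ 2 / (σv ^ 2 * τ0) * vh →
      sInf {x : ℝ | ∃ d v : ℝ, d + τ0 * v ≤ 0 ∧ 0 ≤ d ∧
          x = (dh - d) ^ 2 / σd ^ 2 + (vh - v) ^ 2 / σv ^ 2} =
        dh ^ 2 / σd ^ 2 + vh ^ 2 / σv ^ 2) := by
  have hD : (0:ℝ) < σd ^ 2 + τ0 ^ 2 * σv ^ 2 := by positivity
  have hσd2 : (0:ℝ) < σd ^ 2 := by positivity
  have hσv2 : (0:ℝ) < σv ^ 2 := by positivity
  set S := {x : ℝ | ∃ d v : ℝ, d + τ0 * v ≤ 0 ∧ 0 ≤ d ∧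
      x = (dh - d) ^ 2 / σd ^ 2 + (vh - v) ^ 2 / σv ^ 2} with hS
  have hbdd : BddBelow S := by
    refine ⟨0, ?_⟩
    rintro x ⟨d, v, _, _, rfl⟩
    positivity
  have hmem0 : dh ^ 2 / σd ^ 2 + vh ^ 2 / σv ^ 2 ∈ S :=
    ⟨0, 0, by norm_num, le_refl 0, by ring⟩
  constructor
  · intro hcase
    have hcase' : σd ^ 2 * vh ≤ σv ^ 2 * τ0 * dh := by
      rw [div_mul_eq_mul_div, div_le_iff₀ (by positivity)] at hcase
      linarith
    apply le_antisymm
    · apply csInf_le hbdd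
      refine ⟨(τ0 ^ 2 * σv ^ 2 * dh - τ0 * σd ^ 2 * vh) / (σd ^ 2 + τ0 ^ 2 * σv ^ 2),
        (σd ^ 2 * vh - τ0 * σv ^ 2 * dh) / (σd ^ 2 + τ0 ^ 2 * σv ^ 2), ?_, ?_, ?_⟩
      · exact le_of_eq (by field_simp; ring)
      · apply div_nonneg _ hD.le
        nlinarith
      · field_simp
        ring
    · apply le_csInf ⟨_, hmem0⟩
      rintro x ⟨d, v, hdv, hd0, rfl⟩
      have h1 : (dh - d) ^ 2 / σd ^ 2 + (vh - v) ^ 2 / σv ^ 2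
          = ((dh - d) ^ 2 * σv ^ 2 + (vh - v) ^ 2 * σd ^ 2) / (σd ^ 2 * σv ^ 2) := by
        field_simp
        try ring
      rw [h1, div_le_div_iff₀ hD (by positivity)]
      have hle : dh + τ0 * vh ≤ (dh - d) + τ0 * (vh - v) := by nlinarith
      have hsq : (dh + τ0 * vh) ^ 2 ≤ ((dh - d) + τ0 * (vh - v)) ^ 2 := by nlinarith
      nlinarith [sq_nonneg (σd ^ 2 * (vh - v) - τ0 * σv ^ 2 * (dh - d)), hsq,
        mul_pos hσd2 hσv2]
  · intro hcase
    have hcase' : σv ^ 2 * τ0 * dh < σd ^ 2 * vh := by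
      rw [div_mul_eq_mul_div, lt_div_iff₀ (by positivity)] at hcase
      linarith
    have hvh : 0 < vh := by nlinarith [mul_pos (mul_pos hσv2 hτ0) hdh, hσd2]
    apply le_antisymm
    · exact csInf_le hbdd hmem0
    · apply le_csInf ⟨_, hmem0⟩
      rintro x ⟨d, v, hdv, hd0, rfl⟩
      have h1 : ∀ a b : ℝ, a ^ 2 / σd ^ 2 + b ^ 2 / σv ^ 2
          = (a ^ 2 * σv ^ 2 + b ^ 2 * σd ^ 2) / (σd ^ 2 * σv ^ 2) := by
        intro a b
        field_simp
        try ring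
      rw [h1, h1, div_le_div_iff₀ (by positivity) (by positivity)]
      have key1 : 0 ≤ (-(τ0 * v + d)) * (d + 2 * τ0 * vh - τ0 * v) := by
        apply mul_nonneg (by linarith)
        nlinarith [mul_pos hτ0 hvh]
      have core : σv ^ 2 * (2 * dh * d - d ^ 2) * τ0 ^ 2 +
          σd ^ 2 * (2 * vh * v - v ^ 2) * τ0 ^ 2 ≤ 0 := by
        nlinarith [mul_nonneg key1 hσd2.le, sq_nonneg d,
          mul_nonneg hd0 (mul_nonneg hτ0.le (le_of_lt (sub_pos.mpr hcase')))]
      have P : dh ^ 2 * σv ^ 2 + vh ^ 2 * σd ^ 2 ≤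
          (dh - d) ^ 2 * σv ^ 2 + (vh - v) ^ 2 * σd ^ 2 := by
        nlinarith [core, mul_pos hτ0 hτ0]
      exact mul_le_mul_of_nonneg_right P (by positivity)
end

section
/- Let a > 0, S > 0, W_max > 0, T_max > 0 with S ≤ W_max·T_max. (i) If √(S/a) > W_max, then for all W, T with 0 < W ≤ W_max, 0 < T ≤ T_max and W·T ≤ S, one has 1/W² + a²/T² ≥ 1/W_max² + a²·W_max²/S², with equality if and only if W = W_max and T = S/W_max. (ii) Symmetrically, if √(a·S) > T_max, then for all such W, T one has 1/W² + a²/T² ≥ T_max²/S² + a²/T_max², with equality if and only if W = S/T_max and T = T_max. -/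
lemma key_aux (x y s c : ℝ) (hx : x ≠ 0) (hy : y ≠ 0) (hs : s ≠ 0) :
    (x ^ 2 / s ^ 2 + c ^ 2 / x ^ 2) - (y ^ 2 / s ^ 2 + c ^ 2 / y ^ 2) =
      (y ^ 2 - x ^ 2) * (c ^ 2 * s ^ 2 - x ^ 2 * y ^ 2) / (x ^ 2 * y ^ 2 * s ^ 2) := by
  field_simp
  ring

set_option maxHeartbeats 1600000 in
theorem stmt10 (a S Wmax Tmax : ℝ) (ha : 0 < a) (hS : 0 < S)
    (hWmax : 0 < Wmax) (hTmax : 0 < Tmax) (hbox : S ≤ Wmax * Tmax) :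
    (Real.sqrt (S / a) > Wmax →
      ∀ W T : ℝ, 0 < W → W ≤ Wmax → 0 < T → T ≤ Tmax → W * T ≤ S →
        (1 / Wmax ^ 2 + a ^ 2 * Wmax ^ 2 / S ^ 2 ≤ 1 / W ^ 2 + a ^ 2 / T ^ 2 ∧
         (1 / W ^ 2 + a ^ 2 / T ^ 2 = 1 / Wmax ^ 2 + a ^ 2 * Wmax ^ 2 / S ^ 2 ↔
           W = Wmax ∧ T = S / Wmax))) ∧
    (Real.sqrt (a * S) > Tmax →
      ∀ W T : ℝ, 0 < W → W ≤ Wmax → 0 < T → T ≤ Tmax → W * T ≤ S →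
        (Tmax ^ 2 / S ^ 2 + a ^ 2 / Tmax ^ 2 ≤ 1 / W ^ 2 + a ^ 2 / T ^ 2 ∧
         (1 / W ^ 2 + a ^ 2 / T ^ 2 = Tmax ^ 2 / S ^ 2 + a ^ 2 / Tmax ^ 2 ↔
           W = S / Tmax ∧ T = Tmax))) := by
  constructor
  · intro hsq W T hW hWle hT hTle hWT
    have hSa : a * Wmax ^ 2 < S := by
      have h2 : Wmax ^ 2 < S / a := (Real.lt_sqrt hWmax.le).mp hsq
      have h3 := (lt_div_iff₀ ha).mp h2
      nlinarith
    have hWT2 : W * T * (W * T) ≤ S * S :=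
      mul_le_mul hWT hWT (by positivity) hS.le
    have hA : a ^ 2 * W ^ 2 / S ^ 2 ≤ a ^ 2 / T ^ 2 := by
      rw [div_le_div_iff₀ (by positivity) (by positivity)]
      nlinarith [sq_nonneg a]
    have key : (1 / W ^ 2 + a ^ 2 * W ^ 2 / S ^ 2) -
        (1 / Wmax ^ 2 + a ^ 2 * Wmax ^ 2 / S ^ 2) =
        (Wmax ^ 2 - W ^ 2) * (S ^ 2 - a ^ 2 * W ^ 2 * Wmax ^ 2) /
          (W ^ 2 * Wmax ^ 2 * S ^ 2) := by
      field_simp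
      ring
    have hp : 0 < a * W * Wmax := by positivity
    have hpS : a * W * Wmax < S := by nlinarith
    have hfac : 0 < S ^ 2 - a ^ 2 * W ^ 2 * Wmax ^ 2 := by
      have h4 := mul_lt_mul'' hpS hpS hp.le hp.le
      nlinarith
    have hBnn : 0 ≤ (Wmax ^ 2 - W ^ 2) * (S ^ 2 - a ^ 2 * W ^ 2 * Wmax ^ 2) /
        (W ^ 2 * Wmax ^ 2 * S ^ 2) := by
      apply div_nonneg _ (by positivity)
      apply mul_nonneg _ hfac.le
      nlinarith
    have hB : 1 / Wmax ^ 2 + a ^ 2 * Wmax ^ 2 / S ^ 2 ≤ 1 / W ^ 2 + a ^ 2 * W ^ 2 / S ^ 2 := by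
      linarith
    refine ⟨by linarith, ?_, ?_⟩
    · intro heq
      have hBeq : (Wmax ^ 2 - W ^ 2) * (S ^ 2 - a ^ 2 * W ^ 2 * Wmax ^ 2) /
          (W ^ 2 * Wmax ^ 2 * S ^ 2) = 0 := by linarith
      have h1 : (Wmax ^ 2 - W ^ 2) * (S ^ 2 - a ^ 2 * W ^ 2 * Wmax ^ 2) = 0 := by
        rcases div_eq_zero_iff.mp hBeq with h | h
        · exact h
        · exact absurd h (by positivity)
      have h2 : Wmax ^ 2 - W ^ 2 = 0 := by
        rcases mul_eq_zero.mp h1 with h | h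
        · exact h
        · linarith
      have hWeq : W = Wmax := by
        have h3 : (Wmax - W) * (Wmax + W) = 0 := by linear_combination h2
        rcases mul_eq_zero.mp h3 with h | h
        · linarith
        · linarith
      refine ⟨hWeq, ?_⟩
      subst hWeq
      have hAeq : a ^ 2 / T ^ 2 = a ^ 2 * W ^ 2 / S ^ 2 := by linarith
      have hS2 : a ^ 2 * S ^ 2 = a ^ 2 * W ^ 2 * T ^ 2 :=
        (div_eq_div_iff (by positivity) (by positivity)).mp hAeq
      have hS2' : S ^ 2 = W ^ 2 * T ^ 2 := by
        have ha2 : (a:ℝ) ^ 2 ≠ 0 := by positivity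
        apply mul_left_cancel₀ ha2
        linear_combination hS2
      have h4 : (T * W - S) * (T * W + S) = 0 := by linear_combination -hS2'
      rcases mul_eq_zero.mp h4 with h | h
      · exact (eq_div_iff (ne_of_gt hW)).mpr (by linarith)
      · have : 0 < T * W + S := by positivity
        linarith
    · rintro ⟨rfl, rfl⟩
      congr 1
      rw [div_pow, div_div_eq_mul_div]
  · intro hsq W T hW hWle hT hTle hWT
    have hSa : Tmax ^ 2 < a * S := (Real.lt_sqrt hTmax.le).mp hsq
    have hWT2 : W * T * (W * T) ≤ S * S :=
      mul_le_mul hWT hWT (by positivity) hS.le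
    have hA : T ^ 2 / S ^ 2 ≤ 1 / W ^ 2 := by
      rw [div_le_div_iff₀ (by positivity) (by positivity)]
      nlinarith
    have key : (T ^ 2 / S ^ 2 + a ^ 2 / T ^ 2) -
        (Tmax ^ 2 / S ^ 2 + a ^ 2 / Tmax ^ 2) =
        (Tmax ^ 2 - T ^ 2) * (a ^ 2 * S ^ 2 - T ^ 2 * Tmax ^ 2) /
          (T ^ 2 * Tmax ^ 2 * S ^ 2) :=
      key_aux T Tmax S a hT.ne' hTmax.ne' hS.ne'
    have hp : 0 < T * Tmax := by positivity
    have hpS : T * Tmax < a * S := by nlinarith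
    have hfac : 0 < a ^ 2 * S ^ 2 - T ^ 2 * Tmax ^ 2 := by
      have h4 := mul_lt_mul'' hpS hpS hp.le hp.le
      nlinarith
    have hBnn : 0 ≤ (Tmax ^ 2 - T ^ 2) * (a ^ 2 * S ^ 2 - T ^ 2 * Tmax ^ 2) /
        (T ^ 2 * Tmax ^ 2 * S ^ 2) := by
      apply div_nonneg _ (by positivity)
      apply mul_nonneg _ hfac.le
      nlinarith
    have hB : Tmax ^ 2 / S ^ 2 + a ^ 2 / Tmax ^ 2 ≤ T ^ 2 / S ^ 2 + a ^ 2 / T ^ 2 := by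
      linarith
    refine ⟨by linarith, ?_, ?_⟩
    · intro heq
      have hBeq : (Tmax ^ 2 - T ^ 2) * (a ^ 2 * S ^ 2 - T ^ 2 * Tmax ^ 2) /
          (T ^ 2 * Tmax ^ 2 * S ^ 2) = 0 := by linarith
      have h1 : (Tmax ^ 2 - T ^ 2) * (a ^ 2 * S ^ 2 - T ^ 2 * Tmax ^ 2) = 0 := by
        rcases div_eq_zero_iff.mp hBeq with h | h
        · exact h
        · exact absurd h (by positivity)
      have h2 : Tmax ^ 2 - T ^ 2 = 0 := by
        rcases mul_eq_zero.mp h1 with h | h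
        · exact h
        · linarith
      have hTeq : T = Tmax := by
        have h3 : (Tmax - T) * (Tmax + T) = 0 := by linear_combination h2
        rcases mul_eq_zero.mp h3 with h | h
        · linarith
        · linarith
      subst hTeq
      have hAeq : 1 / W ^ 2 = T ^ 2 / S ^ 2 := by linarith
      have hS2 : 1 * S ^ 2 = T ^ 2 * W ^ 2 :=
        (div_eq_div_iff (by positivity) (by positivity)).mp hAeq
      have h4 : (W * T - S) * (W * T + S) = 0 := by linear_combination -hS2
      rcases mul_eq_zero.mp h4 with h | h
      · exact ⟨(eq_div_iff (ne_of_gt hT)).mpr (by linarith), rfl⟩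
      · have : 0 < W * T + S := by positivity
        linarith
    · rintro ⟨rfl, rfl⟩
      congr 1
      rw [div_pow, one_div_div]
end

section
/- Let c, γ, f0, τ0, Δ_d, Δ_v be positive reals. Define W_con = c/(2Δ_d), T_con = c/(2f0·Δ_v), S_con = W_con·T_con, the conventional error index σ²_{Z,con} = (3c²/(8π²γ))·(1/W_con² + τ0²/(f0²·T_con²)), and the optimized error index σ²_{Z,opt} = 3c²τ0/(4π²γ·f0·S_con). Then σ²_{Z,opt}/σ²_{Z,con} = 2τ0·(Δ_d/Δ_v) / (τ0² + (Δ_d/Δ_v)²); in particular σ²_{Z,opt} ≤ σ²_{Z,con}, with equality if and only if τ0 = Δ_d/Δ_v. -/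
open Real

/-
Both error indices are multiples of the same positive constant `3 Δv² / (2π²γ)`:
`σ²_{Z,opt}` is that constant times `2 τ0 r` and `σ²_{Z,con}` that constant times `τ0² + r²`,
where `r = Δd / Δv`. The claims then reduce to `2 τ0 r ≤ τ0² + r²`, with equality iff `(τ0 - r)² = 0`.
-/

theorem two_mul_eq_add_sq_iff {R : Type*} [CommRing R] [NoZeroDivisors R] {a b : R} :
    2 * a * b = a ^ 2 + b ^ 2 ↔ a = b := by
  have h : a ^ 2 + b ^ 2 - 2 * a * b = (a - b) ^ 2 := by ring
  rw [eq_comm, ← sub_eq_zero, h, pow_eq_zero_iff two_ne_zero, sub_eq_zero]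

section ErrorIndex

variable {c γ f0 τ0 Δd Δv : ℝ}

theorem optErrorIndex_eq (hc : c ≠ 0) (hf0 : f0 ≠ 0) :
    3 * c ^ 2 * τ0 / (4 * π ^ 2 * γ * f0 * (c / (2 * Δd) * (c / (2 * f0 * Δv)))) =
      3 * Δv ^ 2 / (2 * π ^ 2 * γ) * (2 * τ0 * (Δd / Δv)) := by
  field_simp
  ring

theorem conErrorIndex_eq (hc : c ≠ 0) (hf0 : f0 ≠ 0) (hΔv : Δv ≠ 0) :
    3 * c ^ 2 / (8 * π ^ 2 * γ) *
        (1 / (c / (2 * Δd)) ^ 2 + τ0 ^ 2 / (f0 ^ 2 * (c / (2 * f0 * Δv)) ^ 2)) =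
      3 * Δv ^ 2 / (2 * π ^ 2 * γ) * (τ0 ^ 2 + (Δd / Δv) ^ 2) := by
  field_simp
  ring

end ErrorIndex

theorem stmt11_general (c γ f0 τ0 Δd Δv : ℝ) (hc : 0 < c) (hγ : 0 < γ) (hf0 : 0 < f0)
    (hΔv : 0 < Δv) :
    let Wcon : ℝ := c / (2 * Δd)
    let Tcon : ℝ := c / (2 * f0 * Δv)
    let Scon : ℝ := Wcon * Tcon
    let σZcon : ℝ := 3 * c ^ 2 / (8 * π ^ 2 * γ) *
      (1 / Wcon ^ 2 + τ0 ^ 2 / (f0 ^ 2 * Tcon ^ 2))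
    let σZopt : ℝ := 3 * c ^ 2 * τ0 / (4 * π ^ 2 * γ * f0 * Scon)
    σZopt / σZcon = 2 * τ0 * (Δd / Δv) / (τ0 ^ 2 + (Δd / Δv) ^ 2) ∧
    σZopt ≤ σZcon ∧
    (σZopt = σZcon ↔ τ0 = Δd / Δv) := by
  dsimp only
  rw [optErrorIndex_eq hc.ne' hf0.ne', conErrorIndex_eq hc.ne' hf0.ne' hΔv.ne']
  have hK : 0 < 3 * Δv ^ 2 / (2 * π ^ 2 * γ) := by positivity
  refine ⟨mul_div_mul_left _ _ hK.ne', ?_, ?_⟩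
  · exact mul_le_mul_of_nonneg_left (two_mul_le_add_sq _ _) hK.le
  · rw [mul_right_inj' hK.ne', two_mul_eq_add_sq_iff]

theorem stmt11 (c γ f0 τ0 Δd Δv : ℝ) (hc : 0 < c) (hγ : 0 < γ) (hf0 : 0 < f0)
    (hτ0 : 0 < τ0) (hΔd : 0 < Δd) (hΔv : 0 < Δv) :
    let Wcon : ℝ := c / (2 * Δd)
    let Tcon : ℝ := c / (2 * f0 * Δv)
    let Scon : ℝ := Wcon * Tcon
    let σZcon : ℝ := 3 * c ^ 2 / (8 * π ^ 2 * γ) *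
      (1 / Wcon ^ 2 + τ0 ^ 2 / (f0 ^ 2 * Tcon ^ 2))
    let σZopt : ℝ := 3 * c ^ 2 * τ0 / (4 * π ^ 2 * γ * f0 * Scon)
    σZopt / σZcon = 2 * τ0 * (Δd / Δv) / (τ0 ^ 2 + (Δd / Δv) ^ 2) ∧
    σZopt ≤ σZcon ∧
    (σZopt = σZcon ↔ τ0 = Δd / Δv) :=
  stmt11_general c γ f0 τ0 Δd Δv hc hγ hf0 hΔv
end

section
/- Let l be a natural number, a ∈ ℝ, and f ∈ ℝ with f not an integer. Then (1/N^{l+1}) · ∑_{n=0}^{N−1} n^l · cos(a + 2π·f·n) → 0 as N → ∞, and likewise (1/N^{l+1}) · ∑_{n=0}^{N−1} n^l · sin(a + 2π·f·n) → 0 as N → ∞. -/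
open Real Filter Finset

lemma geom_norm_le (z : ℂ) (hz : z ≠ 1) (hz1 : ‖z‖ = 1) (k : ℕ) :
    ‖∑ j ∈ range k, z ^ j‖ ≤ 2 / ‖z - 1‖ := by
  rw [geom_sum_eq hz, norm_div]
  have h1 : (0:ℝ) < ‖z - 1‖ := by
    simpa [sub_eq_zero] using hz
  gcongr
  calc ‖z ^ k - 1‖ ≤ ‖z ^ k‖ + ‖(1:ℂ)‖ := norm_sub_le _ _
    _ ≤ 2 := by rw [norm_pow, hz1, norm_one]; norm_num

lemma key_bound (l : ℕ) (z : ℂ) (hz : z ≠ 1) (hz1 : ‖z‖ = 1) (N : ℕ) :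
    ‖∑ n ∈ range N, (n : ℂ) ^ l * z ^ n‖ ≤ 2 * (2 / ‖z - 1‖) * (N : ℝ) ^ l := by
  set M : ℝ := 2 / ‖z - 1‖ with hM
  have hM0 : 0 ≤ M := div_nonneg (by norm_num) (norm_nonneg _)
  rcases Nat.eq_zero_or_pos N with h | h
  · subst h; simp; positivity
  have hS : ∀ k, ‖∑ j ∈ range k, z ^ j‖ ≤ M := geom_norm_le z hz hz1
  have habel := Finset.sum_range_by_parts (fun i => (i:ℂ)^l) (fun i => z^i) N
  simp only [smul_eq_mul] at habel
  rw [habel]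
  have hNl : ((N - 1 : ℕ) : ℝ) ^ l ≤ (N : ℝ) ^ l := by
    gcongr; exact_mod_cast Nat.sub_le N 1
  have t1 : ‖((N - 1 : ℕ):ℂ)^l * ∑ i ∈ range N, z ^ i‖ ≤ ((N-1:ℕ):ℝ)^l * M := by
    rw [norm_mul]
    have : ‖((N - 1 : ℕ):ℂ)^l‖ = ((N-1:ℕ):ℝ)^l := by
      rw [norm_pow, Complex.norm_natCast]
    rw [this]
    exact mul_le_mul_of_nonneg_left (hS N) (by positivity)
  have t2 : ‖∑ i ∈ range (N-1), (((i+1:ℕ):ℂ)^l - ((i:ℕ):ℂ)^l) * ∑ j ∈ range (i+1), z ^ j‖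
      ≤ ((N-1:ℕ):ℝ)^l * M := by
    calc ‖∑ i ∈ range (N-1), (((i+1:ℕ):ℂ)^l - ((i:ℕ):ℂ)^l) * ∑ j ∈ range (i+1), z ^ j‖
        ≤ ∑ i ∈ range (N-1), (((i+1:ℝ))^l - ((i:ℝ))^l) * M := by
          refine (norm_sum_le _ _).trans (Finset.sum_le_sum fun i _ => ?_)
          rw [norm_mul]
          have he : (((i+1:ℕ):ℂ)^l - ((i:ℕ):ℂ)^l) = ((((i+1:ℝ))^l - ((i:ℝ))^l : ℝ) : ℂ) := by
            push_cast; ring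
          have hnn : (0:ℝ) ≤ ((i+1:ℝ))^l - ((i:ℝ))^l := by
            have : ((i:ℝ))^l ≤ ((i+1:ℝ))^l :=
              pow_le_pow_left₀ (by positivity) (by linarith) l
            linarith
          rw [he, Complex.norm_real, Real.norm_of_nonneg hnn]
          exact mul_le_mul_of_nonneg_left (hS (i+1)) hnn
      _ = (∑ i ∈ range (N-1), (((i+1:ℝ))^l - ((i:ℝ))^l)) * M := by rw [Finset.sum_mul]
      _ = (((N-1:ℕ):ℝ)^l - ((0:ℕ):ℝ)^l) * M := by
          congr 1
          have hc : ∀ i : ℕ, ((i+1:ℝ))^l - ((i:ℝ))^l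
              = (fun j : ℕ => ((j:ℝ))^l) (i+1) - (fun j : ℕ => ((j:ℝ))^l) i := by
            intro i; push_cast; ring
          simp only [hc]
          exact Finset.sum_range_sub (fun i => ((i:ℝ))^l) (N-1)
      _ ≤ ((N-1:ℕ):ℝ)^l * M := by
          apply mul_le_mul_of_nonneg_right _ hM0
          have : (0:ℝ) ≤ ((0:ℕ):ℝ)^l := by positivity
          linarith
  calc ‖_ - _‖ ≤ ((N-1:ℕ):ℝ)^l * M + ((N-1:ℕ):ℝ)^l * M := (norm_sub_le _ _).trans (add_le_add t1 t2)
    _ ≤ (N:ℝ)^l * M + (N:ℝ)^l * M := by gcongr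
    _ = 2 * M * (N:ℝ)^l := by ring

lemma squeeze_aux (l : ℕ) (C : ℝ) (u : ℕ → ℝ) (hu : ∀ N : ℕ, |u N| ≤ C * (N:ℝ) ^ l) :
    Tendsto (fun N : ℕ => ((N : ℝ) ^ (l + 1))⁻¹ * u N) atTop (nhds 0) := by
  apply squeeze_zero_norm' (a := fun N : ℕ => C / N)
  · filter_upwards [eventually_gt_atTop 0] with N hN
    have hN0 : (0:ℝ) < (N:ℝ) := by exact_mod_cast hN
    rw [Real.norm_eq_abs, abs_mul, abs_inv, abs_pow, abs_of_nonneg hN0.le]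
    calc ((N:ℝ)^(l+1))⁻¹ * |u N| ≤ ((N:ℝ)^(l+1))⁻¹ * (C * (N:ℝ)^l) := by
          exact mul_le_mul_of_nonneg_left (hu N) (by positivity)
      _ = C / N := by field_simp [pow_succ]; ring
  · exact tendsto_const_div_atTop_nhds_zero_nat C

theorem stmt12 (l : ℕ) (a f : ℝ) (hf : ∀ k : ℤ, f ≠ (k : ℝ)) :
    Tendsto (fun N : ℕ =>
        ((N : ℝ) ^ (l + 1))⁻¹ *
          ∑ n ∈ Finset.range N, (n : ℝ) ^ l * Real.cos (a + 2 * π * f * n))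
      atTop (nhds 0) ∧
    Tendsto (fun N : ℕ =>
        ((N : ℝ) ^ (l + 1))⁻¹ *
          ∑ n ∈ Finset.range N, (n : ℝ) ^ l * Real.sin (a + 2 * π * f * n))
      atTop (nhds 0) := by
  set z : ℂ := Complex.exp ((2 * π * f : ℝ) * Complex.I) with hzdef
  have hz : z ≠ 1 := by
    rw [hzdef, Ne, Complex.exp_eq_one_iff]
    rintro ⟨n, hn⟩
    apply hf n
    rw [show ((n:ℂ) * (2 * ↑π * Complex.I)) = (((n : ℝ) * (2 * π) : ℝ) : ℂ) * Complex.I by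
      push_cast; ring] at hn
    have h2 : (2 * π * f : ℝ) = (n : ℝ) * (2 * π) := by
      exact_mod_cast mul_right_cancel₀ Complex.I_ne_zero hn
    have h2' : (2 * π) * f = (2 * π) * (n : ℝ) := by linarith
    exact mul_left_cancel₀ (by positivity : (2 * π : ℝ) ≠ 0) h2'
  have hz1 : ‖z‖ = 1 := Complex.norm_exp_ofReal_mul_I _
  set C : ℝ := 2 * (2 / ‖z - 1‖) with hC
  -- main identity
  have hmain : ∀ N : ℕ,
      Complex.exp ((a:ℝ) * Complex.I) * ∑ n ∈ Finset.range N, (n : ℂ) ^ l * z ^ n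
        = ∑ n ∈ Finset.range N,
            (((n : ℝ) ^ l : ℝ) : ℂ) * Complex.exp (((a + 2 * π * f * n : ℝ)) * Complex.I) := by
    intro N
    rw [Finset.mul_sum]
    refine Finset.sum_congr rfl fun n _ => ?_
    rw [hzdef, ← Complex.exp_nat_mul, ← mul_assoc, mul_comm (Complex.exp _), mul_assoc,
      ← Complex.exp_add]
    push_cast
    ring_nf
  have hbound : ∀ N : ℕ,
      ‖Complex.exp ((a:ℝ) * Complex.I) * ∑ n ∈ Finset.range N, (n : ℂ) ^ l * z ^ n‖
        ≤ C * (N:ℝ)^l := by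
    intro N
    rw [norm_mul, Complex.norm_exp_ofReal_mul_I, one_mul]
    exact key_bound l z hz hz1 N
  have hre : ∀ N : ℕ,
      (∑ n ∈ Finset.range N,
          (((n : ℝ) ^ l : ℝ) : ℂ) * Complex.exp (((a + 2 * π * f * n : ℝ)) * Complex.I)).re
        = ∑ n ∈ Finset.range N, (n : ℝ) ^ l * Real.cos (a + 2 * π * f * n) := by
    intro N
    rw [Complex.re_sum]
    exact Finset.sum_congr rfl fun n _ => by
      rw [Complex.re_ofReal_mul, Complex.exp_ofReal_mul_I_re]
  have him : ∀ N : ℕ,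
      (∑ n ∈ Finset.range N,
          (((n : ℝ) ^ l : ℝ) : ℂ) * Complex.exp (((a + 2 * π * f * n : ℝ)) * Complex.I)).im
        = ∑ n ∈ Finset.range N, (n : ℝ) ^ l * Real.sin (a + 2 * π * f * n) := by
    intro N
    rw [Complex.im_sum]
    exact Finset.sum_congr rfl fun n _ => by
      rw [Complex.im_ofReal_mul, Complex.exp_ofReal_mul_I_im]
  constructor
  · apply squeeze_aux l C
    intro N
    rw [← hre N, ← hmain N]
    exact (Complex.abs_re_le_norm _).trans (hbound N)
  · apply squeeze_aux l C
    intro N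
    rw [← him N, ← hmain N]
    exact (Complex.abs_im_le_norm _).trans (hbound N)
end

section
/- Let l0 ∈ {0,1}, let l1, l2 be natural numbers, let Δψ, Δf1, Δf2 ∈ ℝ, and write g_0 = cos, g_1 = sin. Consider X(N,M) = ∑_{n=0}^{N−1} ∑_{m=0}^{M−1} (2πn)^{l1}·(2πm)^{l2}·g_{l0}(Δψ + 2π·Δf1·n + 2π·Δf2·m). (i) If Δψ = 0, Δf1 = 0 and Δf2 = 0, then X(N,M)/(N^{l1+1}·M^{l2+1}) converges, as N → ∞ and M → ∞ jointly, to (2π)^{l1+l2}/((l1+1)(l2+1)) in case l0 = 0 and to 0 in case l0 = 1. (ii) If Δf1 is not an integer or Δf2 is not an integer, then X(N,M)/(N^{l1+1}·M^{l2+1}) converges to 0 as N → ∞ and M → ∞ jointly. -/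
/-!
Writing `g θ = Re (c e^{iθ})` with `c = 1` or `c = -i`, the double sum factors as
`(2π)^(l1+l2) Re (c e^{iψ} S_{l1}(z₁, N) S_{l2}(z₂, M))`, where `S_l(z, N) = ∑_{n<N} n^l z^n` and
`z_j = e^{2πi Δf_j}`. Always `|S_l(z, N)| ≤ N^(l+1)`, and for `z ≠ 1` summation by parts against the
bounded geometric partial sums gives `|S_l(z, N)| = O(N^l)`: one normalized factor tends to zero
while the other stays bounded. In the degenerate case the sum is `g 0 (2π)^(l1+l2) ∑ n^l1 ∑ m^l2`,
and `∑_{n<N} n^l / N^(l+1) → 1/(l+1)` by comparison with `∫₀^N x^l dx`.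
-/

open Real Filter Complex Finset Topology

theorem sum_range_pow_le_div (l N : ℕ) :
    ∑ i ∈ range N, (i : ℝ) ^ l ≤ (N : ℝ) ^ (l + 1) / (l + 1) := by
  have hmono : MonotoneOn (fun x : ℝ => x ^ l) (Set.Icc 0 (0 + N)) := fun x hx _ _ hxy =>
    pow_le_pow_left₀ hx.1 hxy l
  simpa [integral_pow] using hmono.sum_le_integral

theorem div_le_sum_range_pow_add (l N : ℕ) :
    (N : ℝ) ^ (l + 1) / (l + 1) ≤ ∑ i ∈ range N, (i : ℝ) ^ l + (N : ℝ) ^ l := by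
  have hmono : MonotoneOn (fun x : ℝ => x ^ l) (Set.Icc 0 (0 + N)) := fun x hx _ _ hxy =>
    pow_le_pow_left₀ hx.1 hxy l
  have hint := hmono.integral_le_sum
  have hshift : ∑ i ∈ range N, ((i : ℝ) + 1) ^ l + 0 ^ l
      = ∑ i ∈ range N, (i : ℝ) ^ l + (N : ℝ) ^ l := by
    rw [← sum_range_succ (fun i : ℕ => (i : ℝ) ^ l), sum_range_succ']
    push_cast; rfl
  have h0 : (0 : ℝ) ≤ 0 ^ l := by positivity
  simp only [zero_add, integral_pow, Nat.cast_add, Nat.cast_one] at hint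
  norm_num at hint
  linarith

theorem tendsto_sum_range_pow_div_pow (l : ℕ) :
    Tendsto (fun N : ℕ => (∑ i ∈ range N, (i : ℝ) ^ l) / (N : ℝ) ^ (l + 1)) atTop
      (𝓝 (1 / (l + 1))) := by
  have hlower : Tendsto (fun N : ℕ => 1 / ((l : ℝ) + 1) - 1 / N) atTop (𝓝 (1 / (l + 1))) := by
    simpa using tendsto_one_div_atTop_nhds_zero_nat.const_sub (1 / ((l : ℝ) + 1))
  refine tendsto_of_tendsto_of_tendsto_of_le_of_le' hlower tendsto_const_nhds ?_ ?_
  · filter_upwards [eventually_gt_atTop 0] with N hN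
    have hN' : (0 : ℝ) < N := by exact_mod_cast hN
    calc 1 / ((l : ℝ) + 1) - 1 / N = ((N : ℝ) ^ (l + 1) / (l + 1) - N ^ l) / N ^ (l + 1) := by
          field_simp; ring
      _ ≤ _ := by
          gcongr
          linarith [div_le_sum_range_pow_add l N]
  · filter_upwards [eventually_gt_atTop 0] with N hN
    have hN' : (0 : ℝ) < N := by exact_mod_cast hN
    rw [div_le_iff₀ (by positivity), div_mul_eq_mul_div, one_mul]
    exact sum_range_pow_le_div l N

theorem norm_sum_range_smul_le_of_monotone {E : Type*} [SeminormedAddCommGroup E]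
    [NormedSpace ℝ E] {f : ℕ → ℝ} {z : ℕ → E} {b : ℝ} (hf : Monotone f) (hf0 : 0 ≤ f 0)
    (hz : ∀ n, ‖∑ i ∈ range n, z i‖ ≤ b) (N : ℕ) :
    ‖∑ i ∈ range N, f i • z i‖ ≤ 2 * b * f (N - 1) := by
  have hfN : 0 ≤ f (N - 1) := hf0.trans (hf (Nat.zero_le _))
  have hstep : ∀ i, 0 ≤ f (i + 1) - f i := fun i => sub_nonneg.2 (hf i.le_succ)
  have htel : ∑ i ∈ range (N - 1), (f (i + 1) - f i) = f (N - 1) - f 0 := sum_range_sub f _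
  rw [sum_range_by_parts]
  calc ‖f (N - 1) • ∑ i ∈ range N, z i
        - ∑ i ∈ range (N - 1), (f (i + 1) - f i) • ∑ j ∈ range (i + 1), z j‖
      ≤ f (N - 1) * b + ∑ i ∈ range (N - 1), (f (i + 1) - f i) * b := by
        refine (norm_sub_le _ _).trans (add_le_add ?_ ((norm_sum_le _ _).trans ?_))
        · rw [norm_smul, Real.norm_of_nonneg hfN]
          exact mul_le_mul_of_nonneg_left (hz N) hfN
        · refine sum_le_sum fun i _ => ?_
          rw [norm_smul, Real.norm_of_nonneg (hstep i)]
          exact mul_le_mul_of_nonneg_left (hz _) (hstep i)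
    _ ≤ 2 * b * f (N - 1) := by
        have hb : 0 ≤ b := (norm_nonneg _).trans (hz 0)
        rw [← sum_mul, htel]
        nlinarith

theorem norm_geom_sum_le {K : Type*} [NormedDivisionRing K] {z : K} (hz : ‖z‖ ≤ 1)
    (hz1 : z ≠ 1) (n : ℕ) : ‖∑ i ∈ range n, z ^ i‖ ≤ 2 / ‖z - 1‖ := by
  rw [geom_sum_eq hz1, norm_div]
  gcongr
  calc ‖z ^ n - 1‖ ≤ ‖z‖ ^ n + ‖(1 : K)‖ := by rw [← norm_pow]; exact norm_sub_le _ _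
    _ ≤ 2 := by rw [norm_one]; linarith [pow_le_one₀ (norm_nonneg z) hz (n := n)]

noncomputable def normalizedPowGeomSum (l : ℕ) (z : ℂ) (N : ℕ) : ℝ :=
  ‖∑ n ∈ range N, (n : ℝ) ^ l • z ^ n‖ / (N : ℝ) ^ (l + 1)

theorem normalizedPowGeomSum_nonneg (l : ℕ) (z : ℂ) (N : ℕ) : 0 ≤ normalizedPowGeomSum l z N := by
  unfold normalizedPowGeomSum; positivity

theorem normalizedPowGeomSum_le_one {z : ℂ} (hz : ‖z‖ ≤ 1) (l N : ℕ) :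
    normalizedPowGeomSum l z N ≤ 1 := by
  refine div_le_one_of_le₀ ?_ (by positivity)
  calc ‖∑ n ∈ range N, (n : ℝ) ^ l • z ^ n‖ ≤ ∑ n ∈ range N, (n : ℝ) ^ l := by
        refine (norm_sum_le _ _).trans (sum_le_sum fun n _ => ?_)
        rw [norm_smul, norm_pow, norm_pow, Real.norm_natCast]
        exact mul_le_of_le_one_right (by positivity) (pow_le_one₀ (norm_nonneg z) hz)
    _ ≤ (N : ℝ) ^ (l + 1) / (l + 1) := sum_range_pow_le_div l N
    _ ≤ (N : ℝ) ^ (l + 1) := div_le_self (by positivity) (by linarith [l.cast_nonneg (α := ℝ)])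

theorem isBoundedUnder_normalizedPowGeomSum {z : ℂ} (hz : ‖z‖ ≤ 1) (l : ℕ) :
    IsBoundedUnder (· ≤ ·) atTop (‖normalizedPowGeomSum l z ·‖) :=
  isBoundedUnder_of ⟨1, fun N => by
    rw [Real.norm_of_nonneg (normalizedPowGeomSum_nonneg l z N)]
    exact normalizedPowGeomSum_le_one hz l N⟩

theorem tendsto_normalizedPowGeomSum {z : ℂ} (hz : ‖z‖ ≤ 1) (hz1 : z ≠ 1) (l : ℕ) :
    Tendsto (normalizedPowGeomSum l z) atTop (𝓝 0) := by
  set C := 2 * (2 / ‖z - 1‖)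
  have hmono : Monotone fun n : ℕ => (n : ℝ) ^ l := fun _ _ hmn =>
    pow_le_pow_left₀ (Nat.cast_nonneg _) (Nat.cast_le.2 hmn) l
  have hbound : ∀ N : ℕ, 0 < N → normalizedPowGeomSum l z N ≤ C * (1 / N) := by
    intro N hN
    have hN' : (0 : ℝ) < N := by exact_mod_cast hN
    have hC : 0 ≤ C := by positivity
    rw [normalizedPowGeomSum, div_le_iff₀ (by positivity)]
    calc ‖∑ n ∈ range N, (n : ℝ) ^ l • z ^ n‖ ≤ C * ((N - 1 : ℕ) : ℝ) ^ l :=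
          norm_sum_range_smul_le_of_monotone hmono (by positivity) (norm_geom_sum_le hz hz1) N
      _ ≤ C * (N : ℝ) ^ l := by gcongr; exact N.sub_le 1
      _ = C * (1 / N) * N ^ (l + 1) := by field_simp; ring
  refine squeeze_zero' (Eventually.of_forall (normalizedPowGeomSum_nonneg l z))
    (eventually_atTop.2 ⟨1, hbound⟩) ?_
  simpa using tendsto_one_div_atTop_nhds_zero_nat.const_mul C

theorem exp_two_pi_mul_I_ne_one {f : ℝ} (hf : ∀ k : ℤ, f ≠ k) :
    cexp ((2 * π * f : ℝ) * I) ≠ 1 := by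
  rw [Ne, Complex.exp_eq_one_iff]
  rintro ⟨k, hk⟩
  have hcast : ((2 * π * f : ℝ) : ℂ) = ((2 * π * k : ℝ) : ℂ) := by
    apply mul_right_cancel₀ I_ne_zero
    rw [hk]; push_cast; ring
  exact hf k (mul_left_cancel₀ (by positivity) (ofReal_injective hcast))

theorem tendsto_mul_prod_zero_of_isBoundedUnder {ι κ : Type*} {la : Filter ι} {lb : Filter κ}
    {u : ι → ℝ} {v : κ → ℝ} (hu : IsBoundedUnder (· ≤ ·) la (‖u ·‖))
    (hv : IsBoundedUnder (· ≤ ·) lb (‖v ·‖)) (h : Tendsto u la (𝓝 0) ∨ Tendsto v lb (𝓝 0)) :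
    Tendsto (fun p : ι × κ => u p.1 * v p.2) (la ×ˢ lb) (𝓝 0) := by
  rcases h with h | h
  · exact (h.comp tendsto_fst).zero_mul_isBoundedUnder_le (tendsto_snd.isBoundedUnder_comp hv)
  · exact isBoundedUnder_le_mul_tendsto_zero (tendsto_fst.isBoundedUnder_comp hu)
      (h.comp tendsto_snd)

theorem tendsto_sum_sum_mul_pow_div (a r : ℝ) (l1 l2 : ℕ) :
    Tendsto (fun p : ℕ × ℕ =>
        (∑ n ∈ range p.1, ∑ m ∈ range p.2, (r * n) ^ l1 * (r * m) ^ l2 * a)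
          / ((p.1 : ℝ) ^ (l1 + 1) * (p.2 : ℝ) ^ (l2 + 1)))
      (atTop ×ˢ atTop) (𝓝 (a * r ^ (l1 + l2) / ((l1 + 1) * (l2 + 1)))) := by
  have hsum : ∀ N M : ℕ, ∑ n ∈ range N, ∑ m ∈ range M, (r * n) ^ l1 * (r * m) ^ l2 * a
      = a * r ^ (l1 + l2) * ((∑ n ∈ range N, (n : ℝ) ^ l1) * ∑ m ∈ range M, (m : ℝ) ^ l2) := by
    intro N M
    rw [sum_mul_sum, mul_sum]
    refine sum_congr rfl fun n _ => ?_
    rw [mul_sum]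
    refine sum_congr rfl fun m _ => ?_
    ring
  have hlim := (((tendsto_sum_range_pow_div_pow l1).comp tendsto_fst).mul
    ((tendsto_sum_range_pow_div_pow l2).comp tendsto_snd)).const_mul (a * r ^ (l1 + l2))
  convert hlim using 2
  · simp only [hsum, Function.comp_apply]
    ring
  · field_simp

theorem re_sum_sum_mul_exp (c : ℂ) (ψ α β : ℝ) (a b : ℕ → ℝ) (N M : ℕ) :
    ∑ n ∈ range N, ∑ m ∈ range M, a n * b m * (c * cexp ((ψ + α * n + β * m : ℝ) * I)).re
      = (c * cexp (ψ * I) * (∑ n ∈ range N, a n • cexp (α * I) ^ n)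
          * ∑ m ∈ range M, b m • cexp (β * I) ^ m).re := by
  rw [mul_assoc, sum_mul_sum, mul_sum, re_sum]
  refine sum_congr rfl fun n _ => ?_
  rw [mul_sum, re_sum]
  refine sum_congr rfl fun m _ => ?_
  have hexp : cexp ((ψ + α * n + β * m : ℝ) * I)
      = cexp (ψ * I) * cexp (α * I) ^ n * cexp (β * I) ^ m := by
    rw [← Complex.exp_nat_mul, ← Complex.exp_nat_mul, ← Complex.exp_add, ← Complex.exp_add]
    push_cast; ring_nf
  rw [hexp, Complex.real_smul, Complex.real_smul, ← re_ofReal_mul]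
  push_cast
  ring_nf

theorem abs_sum_sum_re_mul_exp_div_le {c : ℂ} (hc : ‖c‖ = 1) {r : ℝ} (hr : 0 ≤ r)
    (ψ α β : ℝ) (l1 l2 N M : ℕ) :
    |(∑ n ∈ range N, ∑ m ∈ range M,
        (r * n) ^ l1 * (r * m) ^ l2 * (c * cexp ((ψ + α * n + β * m : ℝ) * I)).re)
      / ((N : ℝ) ^ (l1 + 1) * (M : ℝ) ^ (l2 + 1))|
      ≤ r ^ (l1 + l2) *
        (normalizedPowGeomSum l1 (cexp (α * I)) N * normalizedPowGeomSum l2 (cexp (β * I)) M) := by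
  have hsum : ∑ n ∈ range N, ∑ m ∈ range M,
        (r * n) ^ l1 * (r * m) ^ l2 * (c * cexp ((ψ + α * n + β * m : ℝ) * I)).re
      = r ^ (l1 + l2) * ∑ n ∈ range N, ∑ m ∈ range M,
        (n : ℝ) ^ l1 * (m : ℝ) ^ l2 * (c * cexp ((ψ + α * n + β * m : ℝ) * I)).re := by
    rw [mul_sum]
    refine sum_congr rfl fun n _ => ?_
    rw [mul_sum]
    refine sum_congr rfl fun m _ => ?_
    ring
  have hre : |(c * cexp (ψ * I) * (∑ n ∈ range N, (n : ℝ) ^ l1 • cexp (α * I) ^ n)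
        * ∑ m ∈ range M, (m : ℝ) ^ l2 • cexp (β * I) ^ m).re|
      ≤ ‖∑ n ∈ range N, (n : ℝ) ^ l1 • cexp (α * I) ^ n‖
        * ‖∑ m ∈ range M, (m : ℝ) ^ l2 • cexp (β * I) ^ m‖ := by
    refine (abs_re_le_norm _).trans_eq ?_
    rw [norm_mul, norm_mul, norm_mul, hc, norm_exp_ofReal_mul_I, one_mul, one_mul]
  rw [hsum, re_sum_sum_mul_exp, abs_div, abs_mul, abs_of_nonneg (by positivity : 0 ≤ r ^ _),
    abs_of_nonneg (by positivity : (0 : ℝ) ≤ (N : ℝ) ^ (l1 + 1) * (M : ℝ) ^ (l2 + 1)),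
    mul_div_assoc, normalizedPowGeomSum, normalizedPowGeomSum, div_mul_div_comm]
  gcongr

theorem stmt13_general (l0 l1 l2 : ℕ) (Δψ Δf1 Δf2 : ℝ) :
    let g : ℝ → ℝ := if l0 = 0 then Real.cos else Real.sin
    let X : ℕ → ℕ → ℝ := fun N M =>
      ∑ n ∈ Finset.range N, ∑ m ∈ Finset.range M,
        (2 * π * n) ^ l1 * (2 * π * m) ^ l2 *
          g (Δψ + 2 * π * Δf1 * n + 2 * π * Δf2 * m)
    ((Δψ = 0 ∧ Δf1 = 0 ∧ Δf2 = 0) →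
      Tendsto (fun p : ℕ × ℕ =>
          X p.1 p.2 / ((p.1 : ℝ) ^ (l1 + 1) * (p.2 : ℝ) ^ (l2 + 1)))
        (atTop ×ˢ atTop)
        (nhds (if l0 = 0 then
          (2 * π) ^ (l1 + l2) / (((l1 : ℝ) + 1) * ((l2 : ℝ) + 1)) else 0))) ∧
    (((∀ k : ℤ, Δf1 ≠ (k : ℝ)) ∨ (∀ k : ℤ, Δf2 ≠ (k : ℝ))) →
      Tendsto (fun p : ℕ × ℕ =>
          X p.1 p.2 / ((p.1 : ℝ) ^ (l1 + 1) * (p.2 : ℝ) ^ (l2 + 1)))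
        (atTop ×ˢ atTop) (nhds 0)) := by
  intro g X
  refine ⟨?_, fun hf => ?_⟩
  · rintro ⟨rfl, rfl, rfl⟩
    convert tendsto_sum_sum_mul_pow_div (g 0) (2 * π) l1 l2 using 2
    · simp [X]
    · split_ifs with h <;> simp [g, h]
  · obtain ⟨c, hc, hg⟩ : ∃ c : ℂ, ‖c‖ = 1 ∧ ∀ θ : ℝ, g θ = (c * cexp (θ * I)).re := by
      by_cases h : l0 = 0
      · exact ⟨1, norm_one, fun θ => by simp [g, h, exp_ofReal_mul_I_re]⟩
      · exact ⟨-I, by simp, fun θ => by simp [g, h, exp_ofReal_mul_I_im]⟩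
    have hz : ∀ f : ℝ, ‖cexp ((2 * π * f : ℝ) * I)‖ ≤ 1 := fun f => (norm_exp_ofReal_mul_I _).le
    have hlim := tendsto_mul_prod_zero_of_isBoundedUnder
      (isBoundedUnder_normalizedPowGeomSum (hz Δf1) l1)
      (isBoundedUnder_normalizedPowGeomSum (hz Δf2) l2)
      (hf.imp (fun h => tendsto_normalizedPowGeomSum (hz _) (exp_two_pi_mul_I_ne_one h) l1)
        (fun h => tendsto_normalizedPowGeomSum (hz _) (exp_two_pi_mul_I_ne_one h) l2))
    refine squeeze_zero_norm (fun p => ?_)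
      (by simpa only [mul_zero] using hlim.const_mul ((2 * π) ^ (l1 + l2)))
    simpa only [X, hg, Real.norm_eq_abs] using
      abs_sum_sum_re_mul_exp_div_le hc (by positivity) Δψ (2 * π * Δf1) (2 * π * Δf2) l1 l2 p.1 p.2

theorem stmt13 (l0 l1 l2 : ℕ) (hl0 : l0 = 0 ∨ l0 = 1) (Δψ Δf1 Δf2 : ℝ) :
    let g : ℝ → ℝ := if l0 = 0 then Real.cos else Real.sin
    let X : ℕ → ℕ → ℝ := fun N M =>
      ∑ n ∈ Finset.range N, ∑ m ∈ Finset.range M,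
        (2 * π * n) ^ l1 * (2 * π * m) ^ l2 *
          g (Δψ + 2 * π * Δf1 * n + 2 * π * Δf2 * m)
    ((Δψ = 0 ∧ Δf1 = 0 ∧ Δf2 = 0) →
      Tendsto (fun p : ℕ × ℕ =>
          X p.1 p.2 / ((p.1 : ℝ) ^ (l1 + 1) * (p.2 : ℝ) ^ (l2 + 1)))
        (atTop ×ˢ atTop)
        (nhds (if l0 = 0 then
          (2 * π) ^ (l1 + l2) / (((l1 : ℝ) + 1) * ((l2 : ℝ) + 1)) else 0))) ∧
    (((∀ k : ℤ, Δf1 ≠ (k : ℝ)) ∨ (∀ k : ℤ, Δf2 ≠ (k : ℝ))) →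
      Tendsto (fun p : ℕ × ℕ =>
          X p.1 p.2 / ((p.1 : ℝ) ^ (l1 + 1) * (p.2 : ℝ) ^ (l2 + 1)))
        (atTop ×ˢ atTop) (nhds 0)) :=
  stmt13_general l0 l1 l2 Δψ Δf1 Δf2
end
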